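/- arXiv:1601.04500 — 4 statements merged into one kernel-verified Lean document; each statement's English description precedes it below -/
import Mathlib

section
/- For a memoryless source, the D-tilted information density tensorizes: if X^n = (X₁,...,Xₙ) is drawn i.i.d. from P_X and ȷ_Y(x, D | P_X) denotes the D-tilted information density of the single-letter source, then ȷ_Y(X^n, D | P_X^n) = Σᵢ₌₁ⁿ ȷ_Y(Xᵢ, D | P_X). -/
open MeasureTheory Real Finset

/-!
The exponential of a sum of single-letter distortions factors into a product, and by Fubini
the integral of that product against the product measure is the product of the single-letter
integrals; taking `-log` turns the product into the sum. Normalising the distortion by `1/n`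
is compensated exactly by the tilt parameter `n·s`.
-/

noncomputable def tiltedInformationDensity {𝒳 𝒴 : Type*} [MeasurableSpace 𝒴]
    (P : Measure 𝒴) (d : 𝒳 → 𝒴 → ℝ) (s D : ℝ) (x : 𝒳) : ℝ :=
  -log (∫ y, exp (-s * (d x y - D)) ∂P)

theorem tiltedInformationDensity_one_div_mul {𝒳 𝒴 : Type*} [MeasurableSpace 𝒴]
    (P : Measure 𝒴) (d : 𝒳 → 𝒴 → ℝ) (s D : ℝ) (x : 𝒳) {c : ℝ} (hc : c ≠ 0) :
    tiltedInformationDensity P (fun x y => 1 / c * d x y) (c * s) D x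
      = tiltedInformationDensity P d s (c * D) x := by
  unfold tiltedInformationDensity
  congr 3 with y
  field_simp

theorem tiltedInformationDensity_pi {ι : Type*} [Fintype ι] {𝒳 𝒴 : ι → Type*}
    [∀ i, MeasurableSpace (𝒴 i)] (P : ∀ i, Measure (𝒴 i)) [∀ i, SigmaFinite (P i)]
    [∀ i, NeZero (P i)]
    (d : ∀ i, 𝒳 i → 𝒴 i → ℝ) (s : ℝ) (D : ι → ℝ) (x : ∀ i, 𝒳 i)
    (hint : ∀ i, Integrable (fun y => exp (-s * (d i (x i) y - D i))) (P i)) :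
    tiltedInformationDensity (Measure.pi P) (fun x y => ∑ i, d i (x i) (y i)) s (∑ i, D i) x
      = ∑ i, tiltedInformationDensity (P i) (d i) s (D i) (x i) := by
  have hfactor : ∀ y : ∀ i, 𝒴 i,
      exp (-s * (∑ i, d i (x i) (y i) - ∑ i, D i))
        = ∏ i, exp (-s * (d i (x i) (y i) - D i)) := by
    intro y
    rw [← exp_sum, ← sum_sub_distrib, mul_sum]
  unfold tiltedInformationDensity
  simp_rw [hfactor]
  rw [integral_fintype_prod_eq_prod (fun i y => exp (-s * (d i (x i) y - D i))),
    log_prod fun i _ => (integral_exp_pos (hint i)).ne', sum_neg_distrib]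

/-- Tensorization of the D-tilted information density for a memoryless source:
with ȷ(x) = -log ∫ exp(-s·(d(x,y) - D)) dP*(y) the single-letter tilted
information density (P* the optimal output distribution, s the tilt parameter),
the n-letter tilted information density with additive distortion
(1/n)·Σᵢ d(xᵢ,yᵢ), output distribution (P*)ⁿ and tilt parameter n·s satisfies
ȷ_n(x^n) = Σᵢ ȷ(xᵢ). -/
theorem tilted_information_density_tensorizes
    {𝒳 𝒴 : Type*} [MeasurableSpace 𝒴]
    (P : Measure 𝒴) [IsProbabilityMeasure P]
    (d : 𝒳 → 𝒴 → ℝ) (s D : ℝ)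
    (n : ℕ) (hn : 0 < n) (x : Fin n → 𝒳)
    (hint : ∀ i, Integrable (fun y => Real.exp (-s * (d (x i) y - D))) P) :
    - Real.log (∫ y : Fin n → 𝒴,
        Real.exp (-((n : ℝ) * s) *
          ((1 / (n : ℝ)) * ∑ i, d (x i) (y i) - D)) ∂(Measure.pi fun _ => P))
      = ∑ i, (- Real.log (∫ y, Real.exp (-s * (d (x i) y - D)) ∂P)) := by
  calc _ = tiltedInformationDensity (Measure.pi fun _ => P)
          (fun x y => 1 / (n : ℝ) * ∑ i, d (x i) (y i)) (n * s) D x := rfl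
    _ = tiltedInformationDensity (Measure.pi fun _ => P)
          (fun x y => ∑ i, d (x i) (y i)) s (∑ _ : Fin n, D) x := by
      rw [tiltedInformationDensity_one_div_mul _ _ _ _ _ (Nat.cast_ne_zero.mpr hn.ne'),
        sum_const, card_univ, Fintype.card_fin, nsmul_eq_mul]
    _ = _ := tiltedInformationDensity_pi (fun _ => P) (fun _ => d) s (fun _ => D) x hint
end

section
/- For a Gaussian source X ~ N(0, σ²) with quadratic distortion d(x,y) = (x-y)² and distortion level 0 < D < σ², the D-tilted information density equals ȷ_Y(x, D | P_X) = (1/2)·log(σ²/D) + (1/2)·(x²/σ² - 1), and consequently its variance under P_X equals 1/2. -/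
open MeasureTheory ProbabilityTheory Real
open scoped NNReal Nat

/-!
For `Y ~ N(0, t)` one completes the square in `y` to get the Gaussian integral
`E[exp (-s (x - Y)²)] = exp (-s x² / (1 + 2 s t)) / √(1 + 2 s t)`; with `s = 1/(2D)` and
`t = σ² - D` we have `1 + 2 s t = σ²/D`, which gives the closed form of the tilted density.
That closed form is affine in `x²`, so its variance is `Var[X²] / (4 σ⁴)`, and
`Var[X²] = E[X⁴] - E[X²]² = 3σ⁴ - σ⁴` by the even Gaussian moments `E[X²ⁿ] = vⁿ (2n-1)‼`,
which come from `Γ(n + 1/2)`.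
-/

theorem integral_exp_neg_mul_sub_sq_gaussianReal {s : ℝ} {t : ℝ≥0} (hst : 0 < 1 + 2 * s * t)
    (x : ℝ) :
    ∫ y, exp (-s * (x - y) ^ 2) ∂gaussianReal 0 t
      = exp (-s * x ^ 2 / (1 + 2 * s * t)) / √(1 + 2 * s * t) := by
  rcases eq_or_ne t 0 with rfl | ht
  · simp
  set k := 1 + 2 * s * t with hk
  have hdens : ∀ y : ℝ, gaussianPDFReal 0 t y • exp (-s * (x - y) ^ 2)
      = (√(2 * π * t))⁻¹ * exp (-s * x ^ 2 / k)
        * exp (-(k / (2 * t)) * (y - 2 * s * t * x / k) ^ 2) := by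
    intro y
    simp only [gaussianPDFReal, smul_eq_mul, sub_zero, mul_assoc, ← exp_add]
    congr 2
    field_simp
    rw [hk]
    ring
  rw [integral_gaussianReal_eq_integral_smul ht, integral_congr_ae (ae_of_all _ hdens),
    integral_const_mul, integral_sub_right_eq_self (fun y => exp (-(k / (2 * t)) * y ^ 2)),
    integral_gaussian, div_div_eq_mul_div, sqrt_div' _ hst.le]
  field_simp

theorem integral_even_pow_mul_exp_neg_mul_sq {b : ℝ} (hb : 0 < b) (n : ℕ) :
    ∫ x : ℝ, x ^ (2 * n) * exp (-b * x ^ 2) = (2 * n - 1 : ℕ)‼ * √(π / b) / (2 * b) ^ n := by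
  have hhalf : ∫ x in Set.Ioi (0 : ℝ), x ^ (2 * n) * exp (-b * x ^ 2)
      = b ^ (-(2 * n + 1 : ℝ) / 2) * (1 / 2) * Gamma (n + 1 / 2) := by
    rw [show (n : ℝ) + 1 / 2 = (2 * n + 1) / 2 by ring,
      ← integral_rpow_mul_exp_neg_mul_rpow two_pos (neg_one_lt_zero.trans_le (by positivity)) hb]
    refine setIntegral_congr_fun measurableSet_Ioi fun x _ => ?_
    norm_cast
  have hsymm : ∫ x : ℝ, x ^ (2 * n) * exp (-b * x ^ 2)
      = 2 * ∫ x in Set.Ioi (0 : ℝ), x ^ (2 * n) * exp (-b * x ^ 2) := by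
    rw [← integral_comp_abs (f := fun x => x ^ (2 * n) * exp (-b * x ^ 2))]
    simp only [pow_mul, sq_abs]
  rw [hsymm, hhalf, Gamma_nat_add_half, show -(2 * n + 1 : ℝ) / 2 = -(n + 1 / 2) by ring,
    rpow_neg hb.le, rpow_add hb, rpow_natCast, ← sqrt_eq_rpow, sqrt_div' _ hb.le]
  field_simp
  ring

theorem integral_even_pow_gaussianReal (v : ℝ≥0) (n : ℕ) :
    ∫ x, x ^ (2 * n) ∂gaussianReal 0 v = v ^ n * (2 * n - 1 : ℕ)‼ := by
  rcases eq_or_ne v 0 with rfl | hv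
  · cases n <;> simp
  have hv' : (0 : ℝ) < v := by positivity
  have hb : 0 < (2 * (v : ℝ))⁻¹ := by positivity
  have hdens : ∀ x : ℝ, gaussianPDFReal 0 v x • x ^ (2 * n)
      = (√(2 * π * v))⁻¹ * (x ^ (2 * n) * exp (-(2 * v : ℝ)⁻¹ * x ^ 2)) := by
    intro x
    rw [gaussianPDFReal, smul_eq_mul, sub_zero, neg_div, div_eq_inv_mul, ← neg_mul]
    ring
  rw [integral_gaussianReal_eq_integral_smul hv, integral_congr_ae (ae_of_all _ hdens),
    integral_const_mul, integral_even_pow_mul_exp_neg_mul_sq hb, div_inv_eq_mul,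
    show π * (2 * v) = 2 * π * v by ring]
  field_simp
  rw [← mul_pow, one_div_mul_cancel hv'.ne', one_pow]

lemma memLp_sq_two_gaussianReal (v : ℝ≥0) : MemLp (fun x : ℝ => x ^ 2) 2 (gaussianReal 0 v) := by
  have h4 := (memLp_id_gaussianReal (μ := 0) (v := v) 4).integrable_norm_pow (p := 4) (by norm_num)
  refine (memLp_two_iff_integrable_sq (by fun_prop)).2 (h4.congr (ae_of_all _ fun x => ?_))
  simp [← pow_mul, Even.pow_abs ⟨2, rfl⟩]

theorem variance_sq_gaussianReal (v : ℝ≥0) :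
    Var[fun x : ℝ => x ^ 2; gaussianReal 0 v] = 2 * v ^ 2 := by
  rw [variance_eq_sub (memLp_sq_two_gaussianReal v)]
  have h1 := integral_even_pow_gaussianReal v 1
  have h2 := integral_even_pow_gaussianReal v 2
  simp only [Pi.pow_apply, ← pow_mul]
  norm_num at h1 h2 ⊢
  rw [h1, h2]
  ring

/-- For a Gaussian source N(0,σ²) with quadratic distortion and 0 < D < σ²,
the D-tilted information density (with optimal output distribution
P* = N(0, σ² - D) and tilt parameter s* = 1/(2D)) equals
(1/2)·log(σ²/D) + (1/2)·(x²/σ² - 1), and its variance under N(0,σ²) is 1/2. -/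
theorem gaussian_tilted_information_density
    (σ2 D : NNReal) (hD : 0 < D) (hDσ : D < σ2) :
    (∀ x : ℝ,
      - Real.log (∫ y, Real.exp (-(1 / (2 * (D : ℝ))) * ((x - y) ^ 2 - (D : ℝ)))
          ∂(gaussianReal 0 (σ2 - D)))
        = (1 / 2) * Real.log ((σ2 : ℝ) / (D : ℝ)) + (1 / 2) * (x ^ 2 / (σ2 : ℝ) - 1)) ∧
    variance (fun x : ℝ =>
        (1 / 2) * Real.log ((σ2 : ℝ) / (D : ℝ)) + (1 / 2) * (x ^ 2 / (σ2 : ℝ) - 1))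
      (gaussianReal 0 σ2) = 1 / 2 := by
  have hσ : (0 : ℝ) < σ2 := hD.trans hDσ
  refine ⟨fun x => ?_, ?_⟩
  · have hk : 1 + 2 * (1 / (2 * D)) * ((σ2 - D : ℝ≥0) : ℝ) = σ2 / D := by
      rw [NNReal.coe_sub hDσ.le]
      field_simp
      ring
    have htilt : ∀ y : ℝ, exp (-(1 / (2 * (D : ℝ))) * ((x - y) ^ 2 - D))
        = exp (1 / 2) * exp (-(1 / (2 * (D : ℝ))) * (x - y) ^ 2) := by
      intro y
      rw [← exp_add]
      congr 1
      field_simp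
      ring
    rw [integral_congr_ae (ae_of_all _ htilt), integral_const_mul,
      integral_exp_neg_mul_sub_sq_gaussianReal (by rw [hk]; positivity), hk,
      log_mul (exp_ne_zero _) (by positivity), log_div (exp_ne_zero _) (by positivity), log_exp,
      log_exp, log_sqrt (by positivity)]
    field_simp
    ring
  · have hquad : (fun x : ℝ => 1 / 2 * log (σ2 / D) + 1 / 2 * (x ^ 2 / σ2 - 1))
        = fun x => (1 / 2 * log (σ2 / D) - 1 / 2) + (1 / (2 * σ2)) * x ^ 2 := by
      ext x
      field_simp
      ring
    rw [hquad, variance_const_add (by fun_prop), variance_const_mul, variance_sq_gaussianReal]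
    field_simp
end

section
/- For a binary memoryless source with P_X(0) = p and Hamming distortion, with distortion level 0 < D < min(p, 1-p), the D-tilted information density is ȷ(x, D | P_X) = log(1/P_X(x)) - h(D), where h is the binary entropy function; consequently its variance under P_X equals p(1-p)·log²((1-p)/p), which does not depend on D. -/
/-!
With `s = log ((1 - D) / D)` one has `exp (-s (d - D)) = exp (s D) / (1 - D) · W(y | x)`, where `W`
is the binary symmetric channel with crossover probability `D`. The optimal output distribution
`Q(0) = (p - D) / (1 - 2D)` is precisely the one that `W` maps back to `P`, so the partition sum at
`x` equals `exp (s D) / (1 - D) · P(x)`, and `s D - log (1 - D) = h(D)` turns its negative logarithm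
into `log (1 / P(x)) - h(D)`. The variance of this shift of `log (1 / P)` is that of a two-point
distribution.
-/

open Real Finset

def binaryPMF (q : ℝ) : Fin 2 → ℝ := fun x => if x = 0 then q else 1 - q

lemma binEntropy_eq_log_odds_mul_sub_log_one_sub {D : ℝ} (hD : 0 < D) (hD1 : D < 1) :
    binEntropy D = log ((1 - D) / D) * D - log (1 - D) := by
  rw [binEntropy, log_div (by linarith) hD.ne', log_inv, log_inv]
  ring

lemma exp_neg_log_odds_mul_hamming_sub {D : ℝ} (hD : 0 < D) (hD1 : D < 1) (c : Prop)
    [Decidable c] :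
    exp (-log ((1 - D) / D) * ((if c then 0 else 1) - D))
      = exp (log ((1 - D) / D) * D) / (1 - D) * (if c then 1 - D else D) := by
  have h1D : 1 - D ≠ 0 := by linarith
  split_ifs
  · field_simp
    ring_nf
  · rw [show -log ((1 - D) / D) * (1 - D) = log ((1 - D) / D) * D + -log ((1 - D) / D) by ring,
      exp_add, exp_neg, exp_log (div_pos (by linarith) hD)]
    field_simp

lemma sum_binaryPMF_mul_bsc (p D : ℝ) (hD : 1 - 2 * D ≠ 0) (x : Fin 2) :
    ∑ y, binaryPMF ((p - D) / (1 - 2 * D)) y * (if x = y then 1 - D else D) = binaryPMF p x := by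
  have hq : (p - D) / (1 - 2 * D) * (1 - 2 * D) = p - D := div_mul_cancel₀ _ hD
  fin_cases x
  · simp only [binaryPMF, Fin.isValue, Fin.zero_eta, mul_ite, ite_mul, Fin.sum_univ_two,
      ↓reduceIte, zero_ne_one, one_ne_zero]
    linear_combination hq
  · simp only [binaryPMF, Fin.isValue, Fin.mk_one, mul_ite, ite_mul, Fin.sum_univ_two,
      one_ne_zero, ↓reduceIte]
    linear_combination -hq

lemma two_point_variance (a u v : ℝ) :
    a * (u - (a * u + (1 - a) * v)) ^ 2 + (1 - a) * (v - (a * u + (1 - a) * v)) ^ 2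
      = a * (1 - a) * (u - v) ^ 2 := by
  ring

theorem binary_hamming_tilted_information_density_general
    (p D : ℝ) (hD : 0 < D) (hDm : D < min p (1 - p)) :
    let P : Fin 2 → ℝ := fun x => if x = 0 then p else 1 - p
    let Q : Fin 2 → ℝ := fun y => if y = 0 then (p - D) / (1 - 2 * D)
                                  else 1 - (p - D) / (1 - 2 * D)
    let dH : Fin 2 → Fin 2 → ℝ := fun x y => if x = y then 0 else 1
    let s : ℝ := Real.log ((1 - D) / D)
    let h : ℝ → ℝ := fun t => -(t * Real.log t + (1 - t) * Real.log (1 - t))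
    let j : Fin 2 → ℝ := fun x => Real.log (1 / P x) - h D
    (∀ x : Fin 2,
      - Real.log (∑ y, Q y * Real.exp (-s * (dH x y - D))) = j x) ∧
    (∑ x, P x * (j x - ∑ x', P x' * j x') ^ 2
      = p * (1 - p) * (Real.log ((1 - p) / p)) ^ 2) := by
  intro P Q dH s h j
  obtain ⟨hDp, hD1p⟩ := lt_min_iff.mp hDm
  have hD1 : D < 1 := by linarith
  have hP : ∀ x, 0 < P x := fun x => by simp only [P]; split_ifs <;> linarith
  have hj : ∀ x, j x = -log (P x) - binEntropy D := fun x => by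
    simp only [j, h, binEntropy, one_div, log_inv]
    ring
  have partition : ∀ x, ∑ y, Q y * exp (-s * (dH x y - D)) = exp (s * D) / (1 - D) * P x := by
    intro x
    simp only [dH, s, exp_neg_log_odds_mul_hamming_sub hD hD1, mul_left_comm _ (_ / (1 - D)),
      ← mul_sum]
    exact congrArg _ (sum_binaryPMF_mul_bsc p D (by linarith) x)
  refine ⟨fun x => ?_, ?_⟩
  · rw [partition, log_mul (by positivity) (hP x).ne', log_div (exp_pos _).ne' (by linarith),
      log_exp, hj, binEntropy_eq_log_odds_mul_sub_log_one_sub hD hD1]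
    ring
  · have hP0 : P 0 = p := rfl
    have hP1 : P 1 = 1 - p := rfl
    simp only [Fin.sum_univ_two, hj, hP0, hP1]
    rw [two_point_variance, log_div (by linarith) (by linarith)]
    ring

/-- For a binary memoryless source with P(0) = p and Hamming distortion, with
0 < D < min(p, 1-p), the D-tilted information density (computed with the
optimal output distribution Q(0) = (p-D)/(1-2D) and tilt s* = log((1-D)/D))
equals log(1/P(x)) - h(D); consequently its variance under P equals
p(1-p)·log²((1-p)/p), independently of D. -/
theorem binary_hamming_tilted_information_density
    (p D : ℝ) (hp : 0 < p) (hp1 : p < 1) (hD : 0 < D) (hDm : D < min p (1 - p)) :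
    let P : Fin 2 → ℝ := fun x => if x = 0 then p else 1 - p
    let Q : Fin 2 → ℝ := fun y => if y = 0 then (p - D) / (1 - 2 * D)
                                  else 1 - (p - D) / (1 - 2 * D)
    let dH : Fin 2 → Fin 2 → ℝ := fun x y => if x = y then 0 else 1
    let s : ℝ := Real.log ((1 - D) / D)
    let h : ℝ → ℝ := fun t => -(t * Real.log t + (1 - t) * Real.log (1 - t))
    let j : Fin 2 → ℝ := fun x => Real.log (1 / P x) - h D
    (∀ x : Fin 2,
      - Real.log (∑ y, Q y * Real.exp (-s * (dH x y - D))) = j x) ∧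
    (∑ x, P x * (j x - ∑ x', P x' * j x') ^ 2
      = p * (1 - p) * (Real.log ((1 - p) / p)) ^ 2) :=
  binary_hamming_tilted_information_density_general p D hD hDm
end

section
/- Log-sum inequality lower bound for the Lagrangian: for any conditional distribution P_{YZ|X} from 𝒳 to 𝒴×𝒵 and any distribution Q_{YZ} on 𝒴×𝒵 with marginal Q_Y, the functional F := D(P_{YZ|X} ‖ Q_{YZ} | P_X) + λ(D(P_{Y|X} ‖ Q_Y | P_X) - R₁) + ν₁(E[d₁(X,Y)] - D₁) + ν₂(E[d₂(X,Z)] - D₂) satisfies F ≥ E_{P_X}[Λ(X)], where Λ(x) := -log Σ_{y,z} Q_{YZ}(y,z)·exp(-λ(log(P_{Y|X}(y|x)/Q_Y(y)) - R₁) - ν₁(d₁(x,y) - D₁) - ν₂(d₂(x,z) - D₂)). -/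
open Real Finset

lemma gibbs_aux {α : Type*} [Fintype α] (W Q' : α → ℝ)
    (hW : ∀ a, 0 < W a) (hW1 : ∑ a, W a = 1) (hQ' : ∀ a, 0 < Q' a) :
    ∑ a, W a * Real.log (W a / Q' a) ≥ - Real.log (∑ a, Q' a) := by
  rcases isEmpty_or_nonempty α with h | h
  · simp at hW1
  set S := ∑ a, Q' a with hS
  have hSpos : 0 < S := Finset.sum_pos (fun a _ => hQ' a) univ_nonempty
  have key : ∑ a, W a * Real.log (Q' a / (W a * S)) ≤ 0 := by
    calc ∑ a, W a * Real.log (Q' a / (W a * S))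
        ≤ ∑ a, W a * (Q' a / (W a * S) - 1) := by
          refine Finset.sum_le_sum fun a _ => ?_
          exact mul_le_mul_of_nonneg_left
            (Real.log_le_sub_one_of_pos (div_pos (hQ' a) (mul_pos (hW a) hSpos))) (hW a).le
      _ = ∑ a, (Q' a / S - W a) := by
          refine Finset.sum_congr rfl fun a _ => ?_
          field_simp [(hW a).ne', hSpos.ne']
      _ = 0 := by
          rw [Finset.sum_sub_distrib, ← Finset.sum_div, hW1, ← hS,
            div_self hSpos.ne']
          ring
  have expand : ∀ a : α, Real.log (W a / Q' a)
      = - Real.log (Q' a / (W a * S)) - Real.log S := by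
    intro a
    rw [Real.log_div (hQ' a).ne' (mul_pos (hW a) hSpos).ne', Real.log_div (hW a).ne' (hQ' a).ne',
      Real.log_mul (hW a).ne' hSpos.ne']
    ring
  calc ∑ a, W a * Real.log (W a / Q' a)
      = ∑ a, (-(W a * Real.log (Q' a / (W a * S))) - W a * Real.log S) := by
        refine Finset.sum_congr rfl fun a _ => ?_
        rw [expand a]; ring
    _ = -(∑ a, W a * Real.log (Q' a / (W a * S))) - (∑ a, W a) * Real.log S := by
        rw [Finset.sum_sub_distrib, Finset.sum_neg_distrib, Finset.sum_mul]
    _ ≥ - Real.log S := by rw [hW1]; linarith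

/-- Log-sum inequality lower bound for the Lagrangian (Lemma `relatefl`):
for any conditional distribution W = P_{YZ|X} and any distribution Q on 𝒴×𝒵
with 𝒴-marginal Q_Y, the Lagrangian F is lower bounded by the expectation of
the generalized tilted information density Λ. -/
theorem log_sum_lagrangian_lower_bound
    {𝒳 𝒴 𝒵 : Type*} [Fintype 𝒳] [Fintype 𝒴] [Fintype 𝒵]
    (P : 𝒳 → ℝ) (hP : ∀ x, 0 ≤ P x) (hP1 : ∑ x, P x = 1)
    (W : 𝒳 → 𝒴 × 𝒵 → ℝ) (hW : ∀ x yz, 0 < W x yz) (hW1 : ∀ x, ∑ yz, W x yz = 1)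
    (Q : 𝒴 × 𝒵 → ℝ) (hQ : ∀ yz, 0 < Q yz) (hQ1 : ∑ yz, Q yz = 1)
    (lam ν₁ ν₂ : ℝ) (hlam : 0 ≤ lam) (hν₁ : 0 ≤ ν₁) (hν₂ : 0 ≤ ν₂)
    (R₁ D₁ D₂ : ℝ)
    (d₁ : 𝒳 → 𝒴 → ℝ) (d₂ : 𝒳 → 𝒵 → ℝ) :
    let PY : 𝒳 → 𝒴 → ℝ := fun x y => ∑ z, W x (y, z)
    let QY : 𝒴 → ℝ := fun y => ∑ z, Q (y, z)
    let F : ℝ :=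
      (∑ x, P x * ∑ yz, W x yz * Real.log (W x yz / Q yz))
      + lam * ((∑ x, P x * ∑ y, PY x y * Real.log (PY x y / QY y)) - R₁)
      + ν₁ * ((∑ x, ∑ yz : 𝒴 × 𝒵, P x * W x yz * d₁ x yz.1) - D₁)
      + ν₂ * ((∑ x, ∑ yz : 𝒴 × 𝒵, P x * W x yz * d₂ x yz.2) - D₂)
    let Λ : 𝒳 → ℝ := fun x =>
      - Real.log (∑ yz : 𝒴 × 𝒵, Q yz *
          Real.exp (- lam * (Real.log (PY x yz.1 / QY yz.1) - R₁)
            - ν₁ * (d₁ x yz.1 - D₁) - ν₂ * (d₂ x yz.2 - D₂)))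
    F ≥ ∑ x, P x * Λ x := by
  intro PY QY F Λ
  set c : 𝒳 → 𝒴 × 𝒵 → ℝ := fun x yz =>
    lam * (Real.log (PY x yz.1 / QY yz.1) - R₁)
      + ν₁ * (d₁ x yz.1 - D₁) + ν₂ * (d₂ x yz.2 - D₂) with hc_def
  set Q' : 𝒳 → 𝒴 × 𝒵 → ℝ := fun x yz => Q yz * Real.exp (-(c x yz)) with hQ'_def
  have hQ'pos : ∀ x yz, 0 < Q' x yz := fun x yz => mul_pos (hQ yz) (Real.exp_pos _)
  have hΛ : ∀ x, Λ x = - Real.log (∑ yz, Q' x yz) := by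
    intro x
    simp only [Λ, hQ'_def, hc_def]
    congr 1
    refine congrArg Real.log (Finset.sum_congr rfl fun yz _ => ?_)
    congr 1
    ring_nf
  have hlog : ∀ x yz, Real.log (W x yz / Q' x yz)
      = Real.log (W x yz / Q yz) + c x yz := by
    intro x yz
    rw [hQ'_def]
    rw [Real.log_div (hW x yz).ne' (mul_pos (hQ yz) (Real.exp_pos _)).ne',
      Real.log_mul (hQ yz).ne' (Real.exp_pos _).ne', Real.log_exp,
      Real.log_div (hW x yz).ne' (hQ yz).ne']
    ring
  -- per-x inequality
  have hpt : ∀ x, (∑ yz, W x yz * Real.log (W x yz / Q yz))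
      + (∑ yz, W x yz * c x yz) ≥ Λ x := by
    intro x
    rw [hΛ x]
    calc (∑ yz, W x yz * Real.log (W x yz / Q yz)) + (∑ yz, W x yz * c x yz)
        = ∑ yz, W x yz * Real.log (W x yz / Q' x yz) := by
          rw [← Finset.sum_add_distrib]
          refine Finset.sum_congr rfl fun yz _ => ?_
          rw [hlog x yz]; ring
      _ ≥ - Real.log (∑ yz, Q' x yz) :=
          gibbs_aux (W x) (Q' x) (hW x) (hW1 x) (hQ'pos x)
  have hPY1 : ∀ x, ∑ y, PY x y = 1 := by
    intro x
    rw [← hW1 x, Fintype.sum_prod_type]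
  -- splitting the tilt sum
  have hc : ∀ x, ∑ yz, W x yz * c x yz
      = lam * ((∑ y, PY x y * Real.log (PY x y / QY y)) - R₁)
        + ν₁ * ((∑ yz : 𝒴 × 𝒵, W x yz * d₁ x yz.1) - D₁)
        + ν₂ * ((∑ yz : 𝒴 × 𝒵, W x yz * d₂ x yz.2) - D₂) := by
    intro x
    have h1 : ∑ yz : 𝒴 × 𝒵, W x yz * (lam * (Real.log (PY x yz.1 / QY yz.1) - R₁))
        = lam * ((∑ y, PY x y * Real.log (PY x y / QY y)) - R₁) := by
      rw [Fintype.sum_prod_type]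
      calc ∑ y, ∑ z, W x (y, z) * (lam * (Real.log (PY x y / QY y) - R₁))
          = ∑ y, PY x y * (lam * (Real.log (PY x y / QY y) - R₁)) := by
            refine Finset.sum_congr rfl fun y _ => ?_
            rw [← Finset.sum_mul]
        _ = ∑ y, (lam * (PY x y * Real.log (PY x y / QY y)) - lam * R₁ * PY x y) := by
            refine Finset.sum_congr rfl fun y _ => ?_
            ring
        _ = lam * ((∑ y, PY x y * Real.log (PY x y / QY y)) - R₁) := by
            rw [Finset.sum_sub_distrib, ← Finset.mul_sum, ← Finset.mul_sum, hPY1 x]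
            ring
    have h2 : ∑ yz : 𝒴 × 𝒵, W x yz * (ν₁ * (d₁ x yz.1 - D₁))
        = ν₁ * ((∑ yz : 𝒴 × 𝒵, W x yz * d₁ x yz.1) - D₁) := by
      calc ∑ yz : 𝒴 × 𝒵, W x yz * (ν₁ * (d₁ x yz.1 - D₁))
          = ∑ yz : 𝒴 × 𝒵, (ν₁ * (W x yz * d₁ x yz.1) - ν₁ * D₁ * W x yz) := by
            refine Finset.sum_congr rfl fun yz _ => ?_; ring
        _ = ν₁ * ((∑ yz : 𝒴 × 𝒵, W x yz * d₁ x yz.1) - D₁) := by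
            rw [Finset.sum_sub_distrib, ← Finset.mul_sum, ← Finset.mul_sum, hW1 x]
            ring
    have h3 : ∑ yz : 𝒴 × 𝒵, W x yz * (ν₂ * (d₂ x yz.2 - D₂))
        = ν₂ * ((∑ yz : 𝒴 × 𝒵, W x yz * d₂ x yz.2) - D₂) := by
      calc ∑ yz : 𝒴 × 𝒵, W x yz * (ν₂ * (d₂ x yz.2 - D₂))
          = ∑ yz : 𝒴 × 𝒵, (ν₂ * (W x yz * d₂ x yz.2) - ν₂ * D₂ * W x yz) := by
            refine Finset.sum_congr rfl fun yz _ => ?_; ring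
        _ = ν₂ * ((∑ yz : 𝒴 × 𝒵, W x yz * d₂ x yz.2) - D₂) := by
            rw [Finset.sum_sub_distrib, ← Finset.mul_sum, ← Finset.mul_sum, hW1 x]
            ring
    calc ∑ yz, W x yz * c x yz
        = ∑ yz : 𝒴 × 𝒵, (W x yz * (lam * (Real.log (PY x yz.1 / QY yz.1) - R₁))
            + W x yz * (ν₁ * (d₁ x yz.1 - D₁)) + W x yz * (ν₂ * (d₂ x yz.2 - D₂))) := by
          refine Finset.sum_congr rfl fun yz _ => ?_
          rw [hc_def]; ring
      _ = _ := by
          rw [Finset.sum_add_distrib, Finset.sum_add_distrib, h1, h2, h3]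
  -- rewrite F
  have hF : F = ∑ x, P x * ((∑ yz, W x yz * Real.log (W x yz / Q yz))
      + (∑ yz, W x yz * c x yz)) := by
    have e1 : ∀ x, ∑ yz : 𝒴 × 𝒵, P x * W x yz * d₁ x yz.1
        = P x * ∑ yz : 𝒴 × 𝒵, W x yz * d₁ x yz.1 := by
      intro x; rw [Finset.mul_sum]
      exact Finset.sum_congr rfl fun yz _ => by ring
    have e2 : ∀ x, ∑ yz : 𝒴 × 𝒵, P x * W x yz * d₂ x yz.2
        = P x * ∑ yz : 𝒴 × 𝒵, W x yz * d₂ x yz.2 := by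
      intro x; rw [Finset.mul_sum]
      exact Finset.sum_congr rfl fun yz _ => by ring
    calc F
        = (∑ x, P x * ∑ yz, W x yz * Real.log (W x yz / Q yz))
          + ∑ x, P x * (lam * ((∑ y, PY x y * Real.log (PY x y / QY y)) - R₁)
            + ν₁ * ((∑ yz : 𝒴 × 𝒵, W x yz * d₁ x yz.1) - D₁)
            + ν₂ * ((∑ yz : 𝒴 × 𝒵, W x yz * d₂ x yz.2) - D₂)) := by
          simp only [F]
          simp only [e1, e2]
          have expand2 : ∀ x, P x * (lam * ((∑ y, PY x y * Real.log (PY x y / QY y)) - R₁)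
              + ν₁ * ((∑ yz : 𝒴 × 𝒵, W x yz * d₁ x yz.1) - D₁)
              + ν₂ * ((∑ yz : 𝒴 × 𝒵, W x yz * d₂ x yz.2) - D₂))
              = lam * (P x * ∑ y, PY x y * Real.log (PY x y / QY y))
                + ν₁ * (P x * ∑ yz : 𝒴 × 𝒵, W x yz * d₁ x yz.1)
                + ν₂ * (P x * ∑ yz : 𝒴 × 𝒵, W x yz * d₂ x yz.2)
                - (lam * R₁ + ν₁ * D₁ + ν₂ * D₂) * P x := fun x => by ring
          simp only [expand2]
          rw [Finset.sum_sub_distrib, Finset.sum_add_distrib, Finset.sum_add_distrib,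
            ← Finset.mul_sum, ← Finset.mul_sum, ← Finset.mul_sum, ← Finset.mul_sum, hP1]
          ring
      _ = _ := by
          rw [← Finset.sum_add_distrib]
          refine Finset.sum_congr rfl fun x _ => ?_
          rw [hc x]; ring
  rw [hF]
  refine Finset.sum_le_sum fun x _ => ?_
  exact mul_le_mul_of_nonneg_left (hpt x) (hP x)
end
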